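/- Let γ : ℝ → ℂ be a continuously differentiable, 2π-periodic immersed closed curve (γ'(t) ≠ 0 for all t), parametrized so that γ restricted to [0,2π) is the curve. Then (1/2π) ∫₀^{2π} κ(t) |γ'(t)| dt is an integer, where κ(t)|γ'(t)| = Im(γ''(t) · conj(γ'(t)))/|γ'(t)|² is the curvature density. Moreover it equals the winding number of the tangent map t ↦ γ'(t)/|γ'(t)| around 0. -/

import Mathlib

open Real Complex

/-! The tangent solves the linear equation `γ'' = (γ''/γ') γ'`, so `γ'(t) = γ'(0) exp ρ(t)` with
`ρ(t) = ∫₀ᵗ γ''/γ'`. Hence `φ(0) + Im ρ` is a continuous angle of the unit tangent, and by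
uniqueness of lifts through the covering `ℝ → S¹` it is `φ`. The curvature density is
`Im (γ''/γ')`, so the total curvature is `Im ρ(2π) = φ(2π) - φ(0)`, which lies in `2πℤ`
because `γ'` is `2π`-periodic. -/

theorem Function.Periodic.deriv {𝕜 F : Type*} [NontriviallyNormedField 𝕜] [NormedAddCommGroup F]
    [NormedSpace 𝕜 F] {f : 𝕜 → F} {c : 𝕜} (hf : Function.Periodic f c) :
    Function.Periodic (deriv f) c := fun x => by
  rw [← deriv_comp_add_const, hf.funext]

theorem Complex.div_im_eq_mul_conj_im_div_sq_norm (w z : ℂ) :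
    (w / z).im = (w * (starRingEnd ℂ) z).im / ‖z‖ ^ 2 := by
  rw [div_im, mul_im, conj_re, conj_im, ← normSq_eq_norm_sq]
  ring

theorem Complex.mul_exp_div_norm (c ρ : ℂ) :
    c * exp ρ / (‖c * exp ρ‖ : ℂ) = c / (‖c‖ : ℂ) * exp (ρ.im * I) := by
  have hsplit : exp ρ = (Real.exp ρ.re : ℂ) * exp (ρ.im * I) := by
    rw [ofReal_exp, ← exp_add, re_add_im]
  have : (Real.exp ρ.re : ℂ) ≠ 0 := ofReal_ne_zero.2 (Real.exp_pos _).ne'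
  rw [norm_mul, norm_exp, hsplit]
  push_cast
  field_simp

theorem eq_of_exp_ofReal_mul_I_eq {A : Type*} [TopologicalSpace A] [PreconnectedSpace A]
    {φ ψ : A → ℝ} (hφ : Continuous φ) (hψ : Continuous ψ)
    (h : ∀ t, exp (φ t * I) = exp (ψ t * I)) (a : A) (ha : φ a = ψ a) : φ = ψ :=
  Circle.isCoveringMap_exp.eq_of_comp_eq hφ hψ (funext fun t => Circle.ext (h t)) a ha

theorem eq_mul_exp_integral_div {f f' : ℝ → ℂ} (hf : ∀ t, HasDerivAt f (f' t) t)
    (hf' : Continuous f') (hne : ∀ t, f t ≠ 0) (a t : ℝ) :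
    f t = f a * exp (∫ s in a..t, f' s / f s) := by
  set ρ : ℝ → ℂ := fun t => ∫ s in a..t, f' s / f s
  have hcont : Continuous fun t => f' t / f t :=
    hf'.div (continuous_iff_continuousAt.2 fun t => (hf t).continuousAt) hne
  have hρ : ∀ t, HasDerivAt ρ (f' t / f t) t := fun t =>
    (hcont.integral_hasStrictDerivAt a t).hasDerivAt
  have hconst : ∀ t, HasDerivAt (fun t => f t * exp (-ρ t)) 0 t := by
    intro t
    refine ((hf t).mul (hρ t).neg.cexp).congr_deriv ?_
    field_simp [hne t]
    ring
  have key := is_const_of_deriv_eq_zero (fun t => (hconst t).differentiableAt)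
    (fun t => (hconst t).deriv) t a
  simp only [ρ, intervalIntegral.integral_same, neg_zero, Complex.exp_zero, mul_one] at key
  rw [← key, mul_assoc, ← Complex.exp_add, neg_add_cancel, Complex.exp_zero, mul_one]

/-- Hopf's Umlaufsatz: for a `C²`, `2π`-periodic immersed closed plane curve `γ`,
the total curvature `(1/2π) ∫₀^{2π} κ(t)|γ'(t)| dt`, where
`κ(t)|γ'(t)| = Im(γ''(t) conj(γ'(t)))/|γ'(t)|²`, is an integer, equal to the winding
number of the unit tangent map around `0` (computed via a continuous angle lift `φ`). -/
theorem stmt6 (γ : ℝ → ℂ) (hγ : ContDiff ℝ 2 γ)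
    (hper : Function.Periodic γ (2 * Real.pi))
    (himm : ∀ t, deriv γ t ≠ 0)
    (φ : ℝ → ℝ) (hφ : Continuous φ)
    (hlift : ∀ t, deriv γ t / (‖deriv γ t‖ : ℂ) = Complex.exp (φ t * Complex.I)) :
    ∃ n : ℤ,
      (1 / (2 * Real.pi)) * ∫ t in (0:ℝ)..(2 * Real.pi),
        (deriv (deriv γ) t * (starRingEnd ℂ) (deriv γ t)).im / (‖deriv γ t‖) ^ 2
        = (n : ℝ) ∧
      (n : ℝ) = (φ (2 * Real.pi) - φ 0) / (2 * Real.pi) := by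
  have hγ' : ContDiff ℝ 1 (deriv γ) := hγ.deriv'
  have hF : Continuous fun t => deriv (deriv γ) t / deriv γ t :=
    (hγ'.continuous_deriv le_rfl).div hγ'.continuous himm
  set ρ : ℝ → ℂ := fun t => ∫ s in (0:ℝ)..t, deriv (deriv γ) s / deriv γ s
  have hexp : ∀ t, deriv γ t = deriv γ 0 * exp (ρ t) :=
    eq_mul_exp_integral_div (fun t => (hγ'.differentiable one_ne_zero t).hasDerivAt)
      (hγ'.continuous_deriv le_rfl) himm 0
  have hρ : Continuous ρ :=
    intervalIntegral.continuous_primitive (fun _ _ => hF.intervalIntegrable _ _) 0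
  have hφρ : φ = fun t => φ 0 + (ρ t).im := by
    refine eq_of_exp_ofReal_mul_I_eq hφ (by fun_prop) (fun t => ?_) 0 (by simp [ρ])
    rw [← hlift, hexp t, mul_exp_div_norm, hlift 0, ofReal_add, add_mul, Complex.exp_add]
  have hint : ∫ t in (0:ℝ)..(2 * π),
      (deriv (deriv γ) t * (starRingEnd ℂ) (deriv γ t)).im / ‖deriv γ t‖ ^ 2
        = (ρ (2 * π)).im := by
    simp_rw [← div_im_eq_mul_conj_im_div_sq_norm]
    exact intervalIntegral.intervalIntegral_im (hF.intervalIntegrable _ _)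
  obtain ⟨n, hn⟩ : ∃ n : ℤ, φ (2 * π) = φ 0 + n * (2 * π) :=
    Circle.exp_eq_exp.1 <| Circle.ext <| by
      rw [Circle.coe_exp, Circle.coe_exp, ← hlift, ← hlift, hper.deriv.eq]
  have hturn : (ρ (2 * π)).im = n * (2 * π) := by
    linarith [congrFun hφρ (2 * π)]
  refine ⟨n, ?_, ?_⟩
  · rw [hint, hturn]
    field_simp
  · rw [hn]
    field_simp
    ring
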